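/- The probability vector (3/11, 1/11, 1/11, 1/11, 1/11, 1/11, 1/11, 1/11, 1/11) satisfies L₁(λ) ≥ 0 and L₂(λ) ≥ 0 with det L₁(λ) = det L₂(λ) = 0, where L₁, L₂ are the two-qutrit absolute-PPT matrices. -/

import Mathlib

/-!
At `λ = (3/11, 1/11, …, 1/11)` we have `λ₆ = λ₇`, so `L₁(λ) = L₂(λ)`, and all differences
`λᵢ - λⱼ` in it vanish except `λ₈ - λ₁ = -2/11`: the common matrix is
`(2/11) · [[1, -1, 0], [-1, 1, 0], [0, 0, 1]]`. A matrix `[[p, q, 0], [q, p, 0], [0, 0, r]]` with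
`|q| ≤ p` and `0 ≤ r` is positive semidefinite and has determinant `r (p² - q²)`, which vanishes
on the boundary `q = -p`.
-/

/-- The Hildebrand matrix `L₁` built from a vector `λ ∈ ℝ⁹` (indices `0,…,8`
correspond to `λ₁,…,λ₉`). -/
def L1 (x : Fin 9 → ℝ) : Matrix (Fin 3) (Fin 3) ℝ :=
  !![2 * x 8, x 7 - x 0, x 5 - x 1;
     x 7 - x 0, 2 * x 6, x 4 - x 2;
     x 5 - x 1, x 4 - x 2, 2 * x 3]

/-- The Hildebrand matrix `L₂` built from a vector `λ ∈ ℝ⁹`. -/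
def L2 (x : Fin 9 → ℝ) : Matrix (Fin 3) (Fin 3) ℝ :=
  !![2 * x 8, x 7 - x 0, x 6 - x 1;
     x 7 - x 0, 2 * x 5, x 4 - x 2;
     x 6 - x 1, x 4 - x 2, 2 * x 3]

namespace Matrix

theorem posSemidef_fin_three_of_abs_le {p q r : ℝ} (hq : |q| ≤ p) (hr : 0 ≤ r) :
    (!![p, q, 0; q, p, 0; 0, 0, r]).PosSemidef := by
  refine PosSemidef.of_dotProduct_mulVec_nonneg ?_ fun v => ?_
  · ext i j
    fin_cases i <;> fin_cases j <;> rfl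
  · obtain ⟨hnegq, hqp⟩ := abs_le.mp hq
    have hsum : 0 ≤ p + q := by linarith
    have hdiff : 0 ≤ p - q := by linarith
    have hquad : star v ⬝ᵥ (!![p, q, 0; q, p, 0; 0, 0, r]).mulVec v =
        (p + q) / 2 * (v 0 + v 1) ^ 2 + (p - q) / 2 * (v 0 - v 1) ^ 2 + r * v 2 ^ 2 := by
      simp only [dotProduct, Pi.star_apply, star_trivial, mulVec, of_apply, cons_val',
        cons_val_fin_one, Fin.sum_univ_three, cons_val_zero, cons_val_one, cons_val, zero_mul,
        add_zero, zero_add]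
      ring
    rw [hquad]
    positivity

theorem det_fin_three_of_two_block (p q r : ℝ) :
    (!![p, q, 0; q, p, 0; 0, 0, r]).det = r * (p ^ 2 - q ^ 2) := by
  simp only [det_fin_three, of_apply, cons_val', cons_val_zero, cons_val_fin_one, cons_val_one,
    cons_val, mul_zero, sub_zero, add_zero, zero_mul]
  ring

end Matrix

theorem L2_eq_L1 {x : Fin 9 → ℝ} (h : x 5 = x 6) : L2 x = L1 x := by
  rw [L1, L2, h]

theorem L1_eq_of_forall_ne_zero {x : Fin 9 → ℝ} {c : ℝ} (hx : ∀ i ≠ 0, x i = c) :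
    L1 x = !![2 * c, c - x 0, 0; c - x 0, 2 * c, 0; 0, 0, 2 * c] := by
  simp only [L1, hx 1 (by decide), hx 2 (by decide), hx 3 (by decide), hx 4 (by decide),
    hx 5 (by decide), hx 6 (by decide), hx 7 (by decide), hx 8 (by decide), sub_self]

/-- The probability vector `(3/11, 1/11, …, 1/11)` satisfies `L₁(λ) ⪰ 0` and
`L₂(λ) ⪰ 0` with `det L₁(λ) = det L₂(λ) = 0`. -/
theorem zeta1_boundary_absPPT :
    (L1 ![3/11, 1/11, 1/11, 1/11, 1/11, 1/11, 1/11, 1/11, 1/11]).PosSemidef ∧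
    (L2 ![3/11, 1/11, 1/11, 1/11, 1/11, 1/11, 1/11, 1/11, 1/11]).PosSemidef ∧
    (L1 ![3/11, 1/11, 1/11, 1/11, 1/11, 1/11, 1/11, 1/11, 1/11]).det = 0 ∧
    (L2 ![3/11, 1/11, 1/11, 1/11, 1/11, 1/11, 1/11, 1/11, 1/11]).det = 0 := by
  set x : Fin 9 → ℝ := ![3/11, 1/11, 1/11, 1/11, 1/11, 1/11, 1/11, 1/11, 1/11]
  have hx : ∀ i ≠ 0, x i = 1 / 11 := by
    intro i hi
    fin_cases i <;> simp_all [x]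
  have hL2 : L2 x = L1 x := L2_eq_L1 rfl
  have hL1 : L1 x = !![2 / 11, -(2 / 11), 0; -(2 / 11), 2 / 11, 0; 0, 0, 2 / 11] := by
    rw [L1_eq_of_forall_ne_zero hx]
    norm_num [x]
  have hpsd : (L1 x).PosSemidef :=
    hL1 ▸ Matrix.posSemidef_fin_three_of_abs_le (by norm_num) (by norm_num)
  have hdet : (L1 x).det = 0 := by
    rw [hL1, Matrix.det_fin_three_of_two_block]
    ring
  exact ⟨hpsd, hL2 ▸ hpsd, hdet, hL2 ▸ hdet⟩
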